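/- (Radial derivative of the cubic phase at cone-aligned configurations.) Let ξ̄, η̄, σ̄ ∈ ℝ×ℝ² with ρ̄ = (ρ₀,ρ) = ξ̄−η̄−σ̄. Assume η ≠ 0, ρ ≠ 0, the cone condition |η|² = 3η₀² holds (so η₀ ≠ 0 and |η̄| = 2|η₀|), and η = θ(|η|/|ρ|)ρ for some θ ∈ {−1, 1} (η and ρ aligned). Then the radial derivative of the cubic phase at η̄ satisfies (η̄/|η̄|) · ∇_η̄ φ₃(ξ̄,η̄,σ̄) = (η₀/|η̄|) · [(√3 ρ₀ + θ·sign(η₀)·|ρ|)² − 12η₀²]. -/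

import Mathlib

noncomputable section

open scoped RealInnerProductSpace

/-- The frequency space `ℝ × ℝ²`, represented as Euclidean `ℝ³`:
coordinate `0` is `v₀` and coordinates `1, 2` form the spatial part `v`,
so that `|v̄| = ‖v̄‖` is the Euclidean norm of the full vector. -/
abbrev E3 : Type := EuclideanSpace ℝ (Fin 3)

/-- The dispersion relation `ω(v̄) = v₀(v₀² + |v|²)`. -/
def omega (v : E3) : ℝ := v 0 * ((v 0) ^ 2 + (v 1) ^ 2 + (v 2) ^ 2)

/-- The cubic phase `φ₃(ξ̄,η̄,σ̄) = ω(ξ̄) − ω(η̄) − ω(σ̄) − ω(ρ̄)` with `ρ̄ = ξ̄ − η̄ − σ̄`. -/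
def phi3 (ξ η σ : E3) : ℝ := omega ξ - omega η - omega σ - omega (ξ - η - σ)

/-- The norm `|v|` of the spatial part `v = (v₁, v₂)` of `v̄`. -/
def snorm2 (v : E3) : ℝ := Real.sqrt ((v 1) ^ 2 + (v 2) ^ 2)

/-!
Since `ρ̄ = ξ̄ - η̄ - σ̄` has derivative `-id` in `η̄`, the radial derivative is
`η̄ · ∇_η̄ φ₃ = Dω(ρ̄) η̄ - Dω(η̄) η̄`, and by Euler's identity for the cubic `ω` the last term is
`3ω(η̄) = 12η₀³` on the cone. Alignment turns the spatial pairing `ρ · η` into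
`θ|η||ρ| = √3 θ sign(η₀) η₀ |ρ|`, after which `Dω(ρ̄) η̄ = η₀ (√3ρ₀ + θ sign(η₀) |ρ|)²`.
-/

lemma Real.sign_mul_self (r : ℝ) : Real.sign r * r = |r| := by
  rcases lt_trichotomy r 0 with h | rfl | h
  · rw [Real.sign_of_neg h, abs_of_neg h, neg_one_mul]
  · simp
  · rw [Real.sign_of_pos h, abs_of_pos h, one_mul]

lemma Real.mul_sign_sq (r : ℝ) : r * Real.sign r ^ 2 = r := by
  rcases lt_trichotomy r 0 with h | rfl | h
  · rw [Real.sign_of_neg h]; ring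
  · simp
  · rw [Real.sign_of_pos h]; ring

lemma hasFDerivAt_omega (v : E3) : HasFDerivAt omega
    ((3 * v 0 ^ 2 + v 1 ^ 2 + v 2 ^ 2) • EuclideanSpace.proj (0 : Fin 3)
      + (2 * v 0 * v 1) • EuclideanSpace.proj (1 : Fin 3)
      + (2 * v 0 * v 2) • EuclideanSpace.proj (2 : Fin 3) : E3 →L[ℝ] ℝ) v := by
  have hproj (i : Fin 3) : HasFDerivAt (fun w : E3 => w i) (EuclideanSpace.proj i : E3 →L[ℝ] ℝ) v :=
    (EuclideanSpace.proj i : E3 →L[ℝ] ℝ).hasFDerivAt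
  have H := (hproj 0).mul ((((hproj 0).mul (hproj 0)).add ((hproj 1).mul (hproj 1))).add
    ((hproj 2).mul (hproj 2)))
  have homega : omega = fun w : E3 => w 0 * (w 0 * w 0 + w 1 * w 1 + w 2 * w 2) := by
    funext w; simp only [omega]; ring
  rw [homega]
  refine H.congr_fderiv ?_
  ext u
  simp only [add_apply, smul_apply, PiLp.proj_apply, smul_eq_mul, Pi.add_apply, Pi.mul_apply]
  ring

lemma differentiableAt_omega (v : E3) : DifferentiableAt ℝ omega v :=
  (hasFDerivAt_omega v).differentiableAt

lemma fderiv_omega_apply (v w : E3) :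
    fderiv ℝ omega v w = (3 * v 0 ^ 2 + v 1 ^ 2 + v 2 ^ 2) * w 0 + 2 * v 0 * (v 1 * w 1 + v 2 * w 2) := by
  rw [(hasFDerivAt_omega v).fderiv]
  simp only [add_apply, smul_apply, PiLp.proj_apply, smul_eq_mul]
  ring

lemma fderiv_omega_self (v : E3) : fderiv ℝ omega v v = 3 * omega v := by
  rw [fderiv_omega_apply, omega]
  ring

lemma fderiv_phi3_apply (ξ η σ w : E3) :
    fderiv ℝ (fun η' => phi3 ξ η' σ) η w = fderiv ℝ omega (ξ - η - σ) w - fderiv ℝ omega η w := by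
  have hρ : HasFDerivAt (fun η' : E3 => ξ - η' - σ) (-ContinuousLinearMap.id ℝ E3) η := by
    simpa using ((hasFDerivAt_id (𝕜 := ℝ) η).const_sub ξ).sub_const σ
  have hωρ := (differentiableAt_omega (ξ - η - σ)).hasFDerivAt.comp η hρ
  have H : HasFDerivAt (fun η' => phi3 ξ η' σ) _ η :=
    (((differentiableAt_omega η).hasFDerivAt.const_sub (omega ξ)).sub_const (omega σ)).sub hωρ
  rw [H.fderiv]
  simp only [sub_apply, neg_apply, ContinuousLinearMap.comp_apply,
    ContinuousLinearMap.id_apply, map_neg]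
  ring

lemma inner_gradient_phi3_self (ξ η σ : E3) :
    ⟪η, gradient (fun η' => phi3 ξ η' σ) η⟫ = fderiv ℝ omega (ξ - η - σ) η - 3 * omega η := by
  rw [real_inner_comm, inner_gradient_left, fderiv_phi3_apply, fderiv_omega_self]

lemma omega_of_cone {v : E3} (hcone : v 1 ^ 2 + v 2 ^ 2 = 3 * v 0 ^ 2) : omega v = 4 * v 0 ^ 3 := by
  rw [omega, add_assoc, hcone]
  ring

lemma snorm2_of_cone {v : E3} (hcone : v 1 ^ 2 + v 2 ^ 2 = 3 * v 0 ^ 2) :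
    snorm2 v = Real.sqrt 3 * |v 0| := by
  rw [snorm2, hcone, Real.sqrt_mul zero_le_three, Real.sqrt_sq_eq_abs]

lemma sq_snorm2 (v : E3) : snorm2 v ^ 2 = v 1 ^ 2 + v 2 ^ 2 :=
  Real.sq_sqrt (by positivity)

/-- With the convention `x / 0 = 0`, this also holds when `ρ` has vanishing spatial part. -/
lemma spatial_inner_of_aligned {η ρ : E3} {θ : ℝ}
    (halign1 : η 1 = θ * (snorm2 η / snorm2 ρ) * ρ 1)
    (halign2 : η 2 = θ * (snorm2 η / snorm2 ρ) * ρ 2) :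
    ρ 1 * η 1 + ρ 2 * η 2 = θ * snorm2 η * snorm2 ρ := by
  have key : ρ 1 * η 1 + ρ 2 * η 2 = θ * (snorm2 η / snorm2 ρ) * snorm2 ρ ^ 2 := by
    rw [sq_snorm2, halign1, halign2]; ring
  rcases eq_or_ne (snorm2 ρ) 0 with h | h
  · rw [key, h]; ring
  · rw [key]; field_simp

theorem stmt_16_general (ξ η σ ρ : E3) (θ : ℝ) (hρdef : ρ = ξ - η - σ)
    (hcone : (η 1) ^ 2 + (η 2) ^ 2 = 3 * (η 0) ^ 2)
    (hθ : θ = 1 ∨ θ = -1)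
    (halign1 : η 1 = θ * (snorm2 η / snorm2 ρ) * ρ 1)
    (halign2 : η 2 = θ * (snorm2 η / snorm2 ρ) * ρ 2) :
    ⟪‖η‖⁻¹ • η, gradient (fun η' => phi3 ξ η' σ) η⟫ =
      (η 0 / ‖η‖) *
        ((Real.sqrt 3 * ρ 0 + θ * Real.sign (η 0) * snorm2 ρ) ^ 2 - 12 * (η 0) ^ 2) := by
  have hθ2 : θ ^ 2 = 1 := by rcases hθ with rfl | rfl <;> norm_num
  have hcross := spatial_inner_of_aligned halign1 halign2
  rw [snorm2_of_cone hcone] at hcross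
  rw [real_inner_smul_left, inner_gradient_phi3_self, ← hρdef, fderiv_omega_apply, hcross,
    omega_of_cone hcone, div_mul_eq_mul_div, div_eq_inv_mul]
  congr 1
  linear_combination -η 0 * sq_snorm2 ρ - η 0 * ρ 0 ^ 2 * Real.sq_sqrt zero_le_three
    - η 0 * Real.sign (η 0) ^ 2 * snorm2 ρ ^ 2 * hθ2 - snorm2 ρ ^ 2 * Real.mul_sign_sq (η 0)
    - 2 * Real.sqrt 3 * ρ 0 * θ * snorm2 ρ * Real.sign_mul_self (η 0)

/-- radial derivative of the cubic phase at cone-aligned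
configurations: if `η ≠ 0`, `ρ ≠ 0`, `|η|² = 3η₀²` and `η = θ(|η|/|ρ|)ρ` with
`θ ∈ {−1,1}`, then `(η̄/|η̄|)·∇_η̄ φ₃ = (η₀/|η̄|)[(√3ρ₀ + θ·sign(η₀)·|ρ|)² − 12η₀²]`. -/
theorem stmt_16 (ξ η σ ρ : E3) (θ : ℝ) (hρdef : ρ = ξ - η - σ)
    (hη : ¬(η 1 = 0 ∧ η 2 = 0)) (hρs : ¬(ρ 1 = 0 ∧ ρ 2 = 0))
    (hcone : (η 1) ^ 2 + (η 2) ^ 2 = 3 * (η 0) ^ 2)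
    (hθ : θ = 1 ∨ θ = -1)
    (halign1 : η 1 = θ * (snorm2 η / snorm2 ρ) * ρ 1)
    (halign2 : η 2 = θ * (snorm2 η / snorm2 ρ) * ρ 2) :
    ⟪‖η‖⁻¹ • η, gradient (fun η' => phi3 ξ η' σ) η⟫ =
      (η 0 / ‖η‖) *
        ((Real.sqrt 3 * ρ 0 + θ * Real.sign (η 0) * snorm2 ρ) ^ 2 - 12 * (η 0) ^ 2) :=
  stmt_16_general ξ η σ ρ θ hρdef hcone hθ halign1 halign2
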